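/- Let k > 0 and α, β > 0. For any grid G of area A and any covering path of G with length L and T stops, αL + βT ≥ σ(A - 2k²), where σ = αγ + βγ²/(4kγ - 2) and γ = (4αk + β + √((4αk+β)β))/(2k(4αk+β)). -/

import Mathlib

/-!
Write `d i` for the length of the `i`-th step. The `ℓ¹`-diamond of radius `k - d/2` around the
midpoint of a step lies in both consecutive diamonds of radius `k`, so each new stop covers at most
`f(d) = 2k² - 2(k - d/2)² = d(2k - d/2)` of fresh area, and `A - 2k² ≤ ∑ f(d i)`. The concave `f`
lies below its tangent at any `c ≤ 2k`, whence `A - 2k² ≤ (2k - c) L + T c²/2`. Writing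
`u = √(4αk + β)` and `v = √β`, one has `σ = (u + v)²/(8k²)`, and the tangent point
`c = 4kv/(u + v)` gives `σ(2k - c) = α` and `σc² = 2β`.
-/

open MeasureTheory

def dist1 (p q : ℝ × ℝ) : ℝ := |p.1 - q.1| + |p.2 - q.2|

def unitSquare (q : ℤ × ℤ) : Set (ℝ × ℝ) :=
  Set.Icc (q.1 : ℝ) ((q.1 : ℝ) + 1) ×ˢ Set.Icc (q.2 : ℝ) ((q.2 : ℝ) + 1)

def IsGrid (G : Set (ℝ × ℝ)) : Prop :=
  ∃ Q : Finset (ℤ × ℤ), G = ⋃ q ∈ Q, unitSquare q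

open Real

def dist1Ball (c : ℝ × ℝ) (r : ℝ) : Set (ℝ × ℝ) := {p | dist1 p c ≤ r}

lemma dist1_nonneg (p q : ℝ × ℝ) : 0 ≤ dist1 p q :=
  add_nonneg (abs_nonneg _) (abs_nonneg _)

lemma dist1_triangle (p q r : ℝ × ℝ) : dist1 p r ≤ dist1 p q + dist1 q r := by
  unfold dist1
  linarith [abs_sub_le p.1 q.1 r.1, abs_sub_le p.2 q.2 r.2]

lemma dist1_midpoint_left (a b : ℝ × ℝ) : dist1 (midpoint ℝ a b) a = dist1 a b / 2 := by
  simp only [dist1, midpoint_eq_smul_add, Prod.smul_fst, Prod.smul_snd, Prod.fst_add,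
    Prod.snd_add, smul_eq_mul, invOf_eq_inv]
  rw [show 2⁻¹ * (a.1 + b.1) - a.1 = -((a.1 - b.1) / 2) by ring,
    show 2⁻¹ * (a.2 + b.2) - a.2 = -((a.2 - b.2) / 2) by ring]
  simp only [abs_neg, abs_div, abs_two]
  ring

lemma dist1_midpoint_right (a b : ℝ × ℝ) : dist1 (midpoint ℝ a b) b = dist1 a b / 2 := by
  rw [midpoint_comm, dist1_midpoint_left]
  simp only [dist1, abs_sub_comm]

lemma dist1Ball_subset_dist1Ball {c c' : ℝ × ℝ} {r r' : ℝ} (h : dist1 c c' + r ≤ r') :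
    dist1Ball c r ⊆ dist1Ball c' r' := fun p (hp : dist1 p c ≤ r) =>
  (dist1_triangle p c c').trans (by linarith)

lemma measurableSet_dist1Ball (c : ℝ × ℝ) (r : ℝ) : MeasurableSet (dist1Ball c r) :=
  (isClosed_le (by unfold dist1; fun_prop) continuous_const).measurableSet

lemma volume_abs_add_abs_le {r : ℝ} (hr : 0 ≤ r) :
    volume {p : ℝ × ℝ | |p.1| + |p.2| ≤ r} = ENNReal.ofReal (2 * r ^ 2) := by
  have h := volume_sum_rpow_le (ι := Fin 2) le_rfl r
  have hΓ3 : Gamma 3 = 2 := by norm_num [Gamma_nat_eq_factorial]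
  simp only [rpow_one, div_one, Fintype.card_fin, Fin.sum_univ_two] at h
  rw [← (volume_preserving_finTwoArrow ℝ).measure_preimage_equiv]
  refine h.trans ?_
  rw [← ENNReal.ofReal_pow hr, ← ENNReal.ofReal_mul (by positivity)]
  norm_num [hΓ3, mul_comm]

lemma volume_dist1Ball (c : ℝ × ℝ) {r : ℝ} (hr : 0 ≤ r) :
    volume (dist1Ball c r) = ENNReal.ofReal (2 * r ^ 2) := by
  have : dist1Ball c r = (· + -c) ⁻¹' {p : ℝ × ℝ | |p.1| + |p.2| ≤ r} := by
    ext p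
    simp [dist1Ball, dist1, sub_eq_add_neg]
  rw [this, measure_preimage_add_right, volume_abs_add_abs_le hr]

/-- The paper's `f`: a bound for the area of a diamond of radius `k` lying outside a diamond of
the same radius whose centre is at distance `d`. -/
noncomputable def stepArea (k d : ℝ) : ℝ := if d ≤ 2 * k then d * (2 * k - d / 2) else 2 * k ^ 2

lemma stepArea_nonneg {k d : ℝ} (hk : 0 ≤ k) (hd : 0 ≤ d) : 0 ≤ stepArea k d := by
  unfold stepArea
  split_ifs with h
  · exact mul_nonneg hd (by linarith)
  · positivity

lemma stepArea_le_tangent {k c : ℝ} (hc : c ≤ 2 * k) (d : ℝ) :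
    stepArea k d ≤ (2 * k - c) * d + c ^ 2 / 2 := by
  unfold stepArea
  split_ifs with h
  · nlinarith [sq_nonneg (d - c)]
  · nlinarith [sq_nonneg (2 * k - c)]

lemma volume_dist1Ball_diff_le {k : ℝ} (hk : 0 ≤ k) (a b : ℝ × ℝ) :
    volume (dist1Ball b k \ dist1Ball a k) ≤ ENNReal.ofReal (stepArea k (dist1 b a)) := by
  unfold stepArea
  split_ifs with h
  · set d := dist1 b a
    set lens := dist1Ball (midpoint ℝ b a) (k - d / 2)
    have hlens_a : lens ⊆ dist1Ball a k :=
      dist1Ball_subset_dist1Ball (by rw [dist1_midpoint_right]; linarith)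
    have hlens_b : lens ⊆ dist1Ball b k :=
      dist1Ball_subset_dist1Ball (by rw [dist1_midpoint_left]; linarith)
    calc volume (dist1Ball b k \ dist1Ball a k)
        ≤ volume (dist1Ball b k \ lens) := measure_mono (Set.sdiff_subset_sdiff_right hlens_a)
      _ = volume (dist1Ball b k) - volume lens :=
          measure_sdiff hlens_b (measurableSet_dist1Ball _ _).nullMeasurableSet
            (measure_ne_top_of_subset hlens_b (volume_dist1Ball b hk ▸ ENNReal.ofReal_ne_top))
      _ = ENNReal.ofReal (d * (2 * k - d / 2)) := by
          rw [volume_dist1Ball b hk, volume_dist1Ball _ (by linarith),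
            ← ENNReal.ofReal_sub _ (by positivity)]
          congr 1
          ring
  · exact (measure_mono Set.sdiff_subset).trans (volume_dist1Ball b hk).le

lemma measure_biUnion_range_succ_le {X : Type*} [MeasurableSpace X] (μ : Measure X)
    (B : ℕ → Set X) (n : ℕ) :
    μ (⋃ i ∈ Finset.range (n + 1), B i) ≤ μ (B 0) + ∑ i ∈ Finset.range n, μ (B (i + 1) \ B i) := by
  induction n with
  | zero => simp
  | succ n ih =>
    have hsub : ⋃ i ∈ Finset.range (n + 2), B i
        ⊆ (⋃ i ∈ Finset.range (n + 1), B i) ∪ (B (n + 1) \ B n) := by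
      rw [Finset.range_add_one, Finset.set_biUnion_insert]
      refine Set.union_subset ?_ Set.subset_union_left
      intro p hp
      by_cases hpn : p ∈ B n
      · exact Or.inl (Set.mem_biUnion (Finset.self_mem_range_succ n) hpn)
      · exact Or.inr ⟨hp, hpn⟩
    calc μ (⋃ i ∈ Finset.range (n + 2), B i)
        ≤ μ (⋃ i ∈ Finset.range (n + 1), B i) + μ (B (n + 1) \ B n) :=
          (measure_mono hsub).trans (measure_union_le _ _)
      _ ≤ _ := by rw [Finset.sum_range_succ, ← add_assoc]; gcongr

lemma toReal_volume_le_add_sum_stepArea {k : ℝ} (hk : 0 ≤ k) (G : Set (ℝ × ℝ)) (T : ℕ)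
    (S : ℕ → ℝ × ℝ) (hcov : ∀ p ∈ G, ∃ i < T, dist1 p (S i) ≤ k) :
    (volume G).toReal ≤
      2 * k ^ 2 + ∑ i ∈ Finset.range (T - 1), stepArea k (dist1 (S (i + 1)) (S i)) := by
  have hnonneg : ∀ i ∈ Finset.range (T - 1), 0 ≤ stepArea k (dist1 (S (i + 1)) (S i)) :=
    fun i _ => stepArea_nonneg hk (dist1_nonneg _ _)
  refine ENNReal.toReal_le_of_le_ofReal (add_nonneg (by positivity) (Finset.sum_nonneg hnonneg)) ?_
  rw [ENNReal.ofReal_add (by positivity) (Finset.sum_nonneg hnonneg),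
    ENNReal.ofReal_sum_of_nonneg hnonneg, ← volume_dist1Ball (S 0) hk]
  rcases T with _ | n
  · have : G = ∅ := Set.eq_empty_of_forall_notMem fun p hp => by simpa using hcov p hp
    simp [this]
  calc volume G ≤ volume (⋃ i ∈ Finset.range (n + 1), dist1Ball (S i) k) :=
        measure_mono fun p hp => by simpa [dist1Ball] using hcov p hp
    _ ≤ _ := measure_biUnion_range_succ_le _ _ n
    _ ≤ _ := by
      rw [Nat.add_sub_cancel]
      gcongr with i
      exact volume_dist1Ball_diff_le hk _ _

lemma sum_stepArea_le {ι : Type*} (s : Finset ι) {k c : ℝ} (hc : c ≤ 2 * k) (d : ι → ℝ) :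
    ∑ i ∈ s, stepArea k (d i) ≤ (2 * k - c) * ∑ i ∈ s, d i + s.card * (c ^ 2 / 2) := by
  calc ∑ i ∈ s, stepArea k (d i) ≤ ∑ i ∈ s, ((2 * k - c) * d i + c ^ 2 / 2) :=
        Finset.sum_le_sum fun i _ => stepArea_le_tangent hc (d i)
    _ = _ := by rw [Finset.sum_add_distrib, Finset.mul_sum, Finset.sum_const, nsmul_eq_mul]

lemma sigma_eq {α β k γ σ : ℝ} (hα : 0 < α) (hβ : 0 < β) (hk : 0 < k)
    (hγ : γ = (4*α*k + β + √((4*α*k+β)*β)) / (2*k*(4*α*k+β)))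
    (hσ : σ = α*γ + β*γ^2/(4*k*γ - 2)) :
    σ = (√(4*α*k+β) + √β)^2 / (8*k^2) := by
  have hs : 0 < 4*α*k + β := by positivity
  rw [sqrt_mul hs.le] at hγ
  set u := √(4*α*k+β)
  set v := √β
  have hu2 : u^2 = 4*α*k+β := sq_sqrt hs.le
  have hv2 : v^2 = β := sq_sqrt hβ.le
  have hu : 0 < u := sqrt_pos.mpr hs
  have hγ' : γ = (u + v) / (2*k*u) := by rw [hγ, ← hu2]; field_simp
  have hden : 4*k*γ - 2 = 2*v/u := by rw [hγ']; field_simp; ring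
  have hα' : α = (u^2 - v^2) / (4*k) := by rw [hu2, hv2]; field_simp; ring
  rw [hσ, hden, hγ', ← hv2, hα']
  field_simp
  ring

lemma exists_tangent_point {α β k σ : ℝ} (hα : 0 < α) (hβ : 0 < β) (hk : 0 < k)
    (hσ : σ = (√(4*α*k+β) + √β)^2 / (8*k^2)) :
    ∃ c ≤ 2 * k, σ * (2 * k - c) = α ∧ σ * c ^ 2 = 2 * β := by
  have hs : 0 < 4*α*k + β := by positivity
  set u := √(4*α*k+β)
  set v := √β
  have hu2 : u^2 = 4*α*k+β := sq_sqrt hs.le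
  have hv2 : v^2 = β := sq_sqrt hβ.le
  have hv : 0 < v := sqrt_pos.mpr hβ
  have hu : 0 < u := sqrt_pos.mpr hs
  have hvu : v ≤ u := sqrt_le_sqrt (by linarith [mul_pos (mul_pos four_pos hα) hk])
  refine ⟨4 * k * v / (u + v), ?_, ?_, ?_⟩
  · rw [div_le_iff₀ (by positivity)]
    nlinarith
  · rw [hσ]
    field_simp
    linear_combination 2 * (hu2 - hv2)
  · rw [hσ, ← hv2]
    field_simp
    ring

theorem stmt17_general (α β k : ℝ) (hα : 0 < α) (hβ : 0 < β) (hk : 0 < k)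
    (γ : ℝ) (hγ : γ = (4*α*k + β + Real.sqrt ((4*α*k+β)*β)) / (2*k*(4*α*k+β)))
    (σ : ℝ) (hσ : σ = α*γ + β*γ^2/(4*k*γ - 2))
    (G : Set (ℝ × ℝ))
    (A : ℝ) (hA : A = (volume G).toReal)
    (T : ℕ) (S : ℕ → ℝ × ℝ)
    (hcov : ∀ p ∈ G, ∃ i < T, dist1 p (S i) ≤ k)
    (L : ℝ) (hL : L = ∑ i ∈ Finset.range (T-1), dist1 (S (i+1)) (S i)) :
    σ*(A - 2*k^2) ≤ α*L + β*(T:ℝ) := by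
  have hσ' := sigma_eq hα hβ hk hγ hσ
  have hσ_nonneg : 0 ≤ σ := hσ' ▸ by positivity
  obtain ⟨c, hc, hσc, hσc2⟩ := exists_tangent_point hα hβ hk hσ'
  have harea : A - 2 * k ^ 2 ≤ (2 * k - c) * L + (T : ℝ) * (c ^ 2 / 2) := by
    have hsum := sum_stepArea_le (Finset.range (T - 1)) hc fun i => dist1 (S (i + 1)) (S i)
    rw [Finset.card_range, ← hL] at hsum
    have hcount : ((T - 1 : ℕ) : ℝ) * (c ^ 2 / 2) ≤ T * (c ^ 2 / 2) := by
      gcongr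
      exact Nat.sub_le T 1
    linarith [hA ▸ toReal_volume_le_add_sum_stepArea hk.le G T S hcov]
  calc σ * (A - 2 * k ^ 2) ≤ σ * ((2 * k - c) * L + (T : ℝ) * (c ^ 2 / 2)) := by gcongr
    _ = (σ * (2 * k - c)) * L + (σ * c ^ 2) / 2 * T := by ring
    _ = α * L + β * T := by rw [hσc, hσc2]; ring

theorem stmt17 (α β k : ℝ) (hα : 0 < α) (hβ : 0 < β) (hk : 0 < k)
    (γ : ℝ) (hγ : γ = (4*α*k + β + Real.sqrt ((4*α*k+β)*β)) / (2*k*(4*α*k+β)))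
    (σ : ℝ) (hσ : σ = α*γ + β*γ^2/(4*k*γ - 2))
    (G : Set (ℝ × ℝ)) (hG : IsGrid G)
    (A : ℝ) (hA : A = (volume G).toReal)
    (T : ℕ) (hT : 1 ≤ T) (S : ℕ → ℝ × ℝ)
    (hcov : ∀ p ∈ G, ∃ i < T, dist1 p (S i) ≤ k)
    (L : ℝ) (hL : L = ∑ i ∈ Finset.range (T-1), dist1 (S (i+1)) (S i)) :
    σ*(A - 2*k^2) ≤ α*L + β*(T:ℝ) :=
  stmt17_general α β k hα hβ hk γ hγ σ hσ G A hA T S hcov L hL
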